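/- For any twice continuously differentiable f : ℝ → ℝ with bounded second derivative, and reals q, a, s, u with u·(q + a - s + u) = 0, one has |f(ε(q + a - s + u)) - f(εq) - ε f'(εq)(a - s) - (ε²/2) f''(εq)(a-s)² - ε u f'(ε(q+a-s+u))| ≤ (ε³/6)·‖f'''‖_∞·|a-s|³ + (ε²/2)·‖f''‖_∞·u², provided f is three times differentiable with bounded third derivative. -/

import Mathlib

/-!
Put `A = ε q`, `d = ε (a - s)` and `v = ε u`. The quantity to bound is the second-order Taylor
remainder of `f` at `A` with step `d`, except that `f` is evaluated at the overshoot `A + d + v`,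
and the overshoot is compensated by `v f'(A + d + v)`. It splits as the second-order Taylor
remainder of `f` with step `d + v`, minus `v` times the first-order Taylor remainder of `f'`,
minus `f''(A) v² / 2`; the Lagrange forms of the two remainders give the bound `C₃ |d + v|³ / 6 + C₃ v |d + v|² / 2 + C₂ v² / 2`.
By `u (q + a - s + u) = 0`, either `v = 0`, or `d + v = -A` and then
`q³ + 3 u q² ≤ (q + u)³` absorbs the middle term into the cubic one.
-/

open Set Finset
open scoped Nat

variable {f : ℝ → ℝ} {n : ℕ}

lemma taylorWithinEval_eq_taylorWithinEval_univ (hf : ContDiff ℝ n f) {s : Set ℝ}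
    (hs : UniqueDiffOn ℝ s) {x₀ : ℝ} (hx₀ : x₀ ∈ s) (x : ℝ) :
    taylorWithinEval f n s x₀ x = taylorWithinEval f n univ x₀ x := by
  simp only [taylor_within_apply, iteratedDerivWithin_univ]
  refine sum_congr rfl fun k hk => ?_
  have hk : (k : WithTop ℕ∞) ≤ n := by exact_mod_cast Nat.lt_succ_iff.mp (mem_range.mp hk)
  rw [iteratedDerivWithin_eq_iteratedDeriv hs (hf.contDiffAt.of_le hk) hx₀]

lemma abs_sub_taylorWithinEval_univ_le (hf : ContDiff ℝ (n + 1) f) {C : ℝ}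
    (hC : ∀ x, |iteratedDeriv (n + 1) f x| ≤ C) (x₀ x : ℝ) :
    |f x - taylorWithinEval f n univ x₀ x| ≤ C * |x - x₀| ^ (n + 1) / (n + 1)! := by
  rcases eq_or_ne x₀ x with rfl | hx
  · simp
  obtain ⟨x', -, hx'⟩ := taylor_mean_remainder_lagrange_iteratedDeriv hx hf.contDiffOn
  rw [← taylorWithinEval_eq_taylorWithinEval_univ hf.of_succ (uniqueDiffOn_uIcc hx)
    left_mem_uIcc, hx', abs_div, abs_mul, abs_pow, Nat.abs_cast]
  gcongr
  exact hC x'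

lemma abs_sub_taylor_one_le (hf : ContDiff ℝ 2 f) {C : ℝ}
    (hC : ∀ x, |iteratedDeriv 2 f x| ≤ C) (x₀ x : ℝ) :
    |f x - f x₀ - deriv f x₀ * (x - x₀)| ≤ C / 2 * |x - x₀| ^ 2 := by
  have h := abs_sub_taylorWithinEval_univ_le (n := 1) hf hC x₀ x
  simp only [taylor_within_apply, iteratedDerivWithin_univ, sum_range_succ, sum_range_zero,
    iteratedDeriv_zero, iteratedDeriv_one, Nat.factorial, smul_eq_mul] at h
  convert h using 1
  · congr 1; ring
  · push_cast; ring

lemma abs_sub_taylor_two_le (hf : ContDiff ℝ 3 f) {C : ℝ}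
    (hC : ∀ x, |iteratedDeriv 3 f x| ≤ C) (x₀ x : ℝ) :
    |f x - f x₀ - deriv f x₀ * (x - x₀) - iteratedDeriv 2 f x₀ / 2 * (x - x₀) ^ 2|
      ≤ C / 6 * |x - x₀| ^ 3 := by
  have h := abs_sub_taylorWithinEval_univ_le (n := 2) hf hC x₀ x
  simp only [taylor_within_apply, iteratedDerivWithin_univ, sum_range_succ, sum_range_zero,
    iteratedDeriv_zero, iteratedDeriv_one, Nat.factorial, smul_eq_mul] at h
  convert h using 1
  · congr 1; ring
  · push_cast; ring

lemma abs_taylor_two_sub_overshoot_le (hf : ContDiff ℝ 3 f) {C₂ C₃ : ℝ}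
    (hC₂ : ∀ x, |iteratedDeriv 2 f x| ≤ C₂) (hC₃ : ∀ x, |iteratedDeriv 3 f x| ≤ C₃)
    (x₀ d v : ℝ) :
    |f (x₀ + d + v) - f x₀ - deriv f x₀ * d - iteratedDeriv 2 f x₀ / 2 * d ^ 2
        - v * deriv f (x₀ + d + v)|
      ≤ C₃ / 6 * |d + v| ^ 3 + |v| * (C₃ / 2 * |d + v| ^ 2) + C₂ / 2 * v ^ 2 := by
  have hf' : ContDiff ℝ 2 (deriv f) := hf.deriv' (n := 2)
  have hC₃' : ∀ x, |iteratedDeriv 2 (deriv f) x| ≤ C₃ := fun x => by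
    rw [← iteratedDeriv_succ']; exact hC₃ x
  have hderiv2 : deriv (deriv f) x₀ = iteratedDeriv 2 f x₀ := by
    rw [iteratedDeriv_succ, iteratedDeriv_one]
  set x := x₀ + d + v
  have hstep : x - x₀ = d + v := by ring
  have h₃ := abs_sub_taylor_two_le hf hC₃ x₀ x
  have h₂ := abs_sub_taylor_one_le hf' hC₃' x₀ x
  rw [hderiv2, hstep] at h₂
  rw [hstep] at h₃
  calc _ = |(f x - f x₀ - deriv f x₀ * (d + v) - iteratedDeriv 2 f x₀ / 2 * (d + v) ^ 2)
          - v * (deriv f x - deriv f x₀ - iteratedDeriv 2 f x₀ * (d + v))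
          - iteratedDeriv 2 f x₀ / 2 * v ^ 2| := by congr 1; ring
    _ ≤ |f x - f x₀ - deriv f x₀ * (d + v) - iteratedDeriv 2 f x₀ / 2 * (d + v) ^ 2|
          + |v| * |deriv f x - deriv f x₀ - iteratedDeriv 2 f x₀ * (d + v)|
          + |iteratedDeriv 2 f x₀| / 2 * v ^ 2 := by
      refine (abs_sub _ _).trans (add_le_add ((abs_sub _ _).trans_eq ?_) (le_of_eq ?_))
      · rw [abs_mul]
      · rw [abs_mul, abs_div, abs_two, abs_sq]
    _ ≤ _ := by gcongr; exact hC₂ x₀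

theorem stmt_6 (f : ℝ → ℝ) (hf : ContDiff ℝ 3 f) (C2 C3 : ℝ)
    (hC2 : ∀ x, |iteratedDeriv 2 f x| ≤ C2)
    (hC3 : ∀ x, |iteratedDeriv 3 f x| ≤ C3)
    (ε : ℝ) (hε : 0 < ε) (q a s u : ℝ) (hq : 0 ≤ q) (hu : 0 ≤ u)
    (horth : u * (q + a - s + u) = 0) :
    |f (ε * (q + a - s + u)) - f (ε * q) - ε * deriv f (ε * q) * (a - s)
        - ε ^ 2 / 2 * iteratedDeriv 2 f (ε * q) * (a - s) ^ 2
        - ε * u * deriv f (ε * (q + a - s + u))|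
      ≤ ε ^ 3 / 6 * C3 * |a - s| ^ 3 + ε ^ 2 / 2 * C2 * u ^ 2 := by
  have hC3_nonneg : 0 ≤ C3 := (abs_nonneg _).trans (hC3 0)
  have h := abs_taylor_two_sub_overshoot_le hf hC2 hC3 (ε * q) (ε * (a - s)) (ε * u)
  rw [show ε * q + ε * (a - s) + ε * u = ε * (q + a - s + u) by ring,
    show ε * (a - s) + ε * u = ε * (a - s + u) by ring, abs_mul ε, abs_mul ε,
    abs_of_pos hε, abs_of_nonneg hu] at h
  refine le_trans (le_of_eq ?_) (h.trans ?_)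
  · congr 1; ring
  rcases mul_eq_zero.mp horth with rfl | hsum
  · simp only [add_zero, mul_zero, zero_mul]
    exact le_of_eq (by ring)
  · have hsum' : a - s + u = -q := by linarith
    have has : |a - s| = q + u := by
      rw [show a - s = -(q + u) by linarith, abs_neg, abs_of_nonneg (add_nonneg hq hu)]
    rw [hsum', abs_neg, abs_of_nonneg hq, has]
    have hcross : 0 ≤ C3 * ε ^ 3 / 6 * (3 * q * u ^ 2 + u ^ 3) := by positivity
    linarith
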